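/- Let ε ∈ (0,1/2), C ≥ 1, n, d ∈ ℕ, and A, B > 0. Let M be a finite metric space with at least two points that is C-embeddable into the d-dimensional Euclidean space ℓ₂^d, let β ≥ 1/2, and let 𝒩 = {N_x}_{x∈M} be a family of pairwise disjoint nonempty finite metric spaces such that for every x ∈ M the weighted diamond W_n admits no embedding into N_x with distortion ≤ A/B. Suppose φ : W_n → M_β[𝒩] satisfies B·d_{W_n}(u₁,u₂) ≤ d_β(φ(u₁),φ(u₂)) ≤ A·d_{W_n}(u₁,u₂) for all u₁, u₂ ∈ W_n. Then either 2^{⌊√n⌋} ≤ (2C(A/B)+1)^d, or A/B ≥ (1/2+ε)^{⌊√n⌋−n}. -/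

import Mathlib

noncomputable section

open scoped ENNReal Classical

namespace Stmt

/-- Vertex set together with the (oriented) edge relation of the diamond graph `D n`. -/
def VE : ℕ → (V : Type) × (V → V → Prop)
  | 0 => ⟨Fin 2, fun u v => u = 0 ∧ v = 1⟩
  | n + 1 =>
      ⟨(VE n).1 ⊕ ({e : (VE n).1 × (VE n).1 // (VE n).2 e.1 e.2} × Bool),
        fun u v =>
          ∃ (e : {e : (VE n).1 × (VE n).1 // (VE n).2 e.1 e.2}) (b : Bool),
            (u = Sum.inl e.1.1 ∧ v = Sum.inr (e, b)) ∨
            (u = Sum.inr (e, b) ∧ v = Sum.inl e.1.2)⟩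

/-- Vertices of the diamond graph `D n` (equivalently, of the weighted diamond `W n`). -/
def Vert (n : ℕ) : Type := (VE n).1

/-- The (oriented) edge relation of the diamond graph `D n`. -/
def dEdge (n : ℕ) : Vert n → Vert n → Prop := (VE n).2

/-- The edges of generation `k` inside the vertex set of `D n`: the edges of `D k`,
transported to `Vert n` via the canonical inclusions.  These are the edges of the
weighted diamond `W n`, which get weight `(1/2 + ε) ^ k`. -/
def edgeAt : (n : ℕ) → (k : ℕ) → Vert n → Vert n → Prop
  | 0, k => fun u v => k = 0 ∧ dEdge 0 u v
  | n + 1, k => fun u v =>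
      (k = n + 1 ∧ dEdge (n + 1) u v) ∨
      (∃ u' v' : Vert n, u = Sum.inl u' ∧ v = Sum.inl v' ∧ edgeAt n k u' v')

/-- Edge weights of the weighted diamond `W n`:  the value is `(1/2 + ε) ^ k` if `{u, v}`
is an edge of generation `k`, and `∞` if `{u, v}` is not an edge of `W n`. -/
def wCost (ε : ℝ) (n : ℕ) (u v : Vert n) : ℝ≥0∞ :=
  ⨅ (k : ℕ) (_ : edgeAt n k u v ∨ edgeAt n k v u), ENNReal.ofReal ((1 / 2 + ε) ^ k)

/-- Total weight of a walk, recorded as the list of visited vertices. -/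
def walkCost {V : Type*} (c : V → V → ℝ≥0∞) : List V → ℝ≥0∞
  | [] => 0
  | [_] => 0
  | u :: v :: l => c u v + walkCost c (v :: l)

/-- The shortest-path (extended) distance associated to an edge-weight function `c`. -/
def spDist {V : Type*} (c : V → V → ℝ≥0∞) (u v : V) : ℝ≥0∞ :=
  ⨅ p : { l : List V // l.head? = some u ∧ l.getLast? = some v }, walkCost c p.1

/-- The shortest-path metric `d_{W_n}` of the weighted diamond `W n` (with parameter `ε`). -/
def dW (ε : ℝ) (n : ℕ) (u v : Vert n) : ℝ :=
  (spDist (wCost ε n) u v).toReal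

/-- `embedsM K dV dY` : there is a map of distortion at most `K` from the space with distance
function `dV` to the space with distance function `dY`. -/
def embedsM {V Y : Type*} (K : ℝ) (dV : V → V → ℝ) (dY : Y → Y → ℝ) : Prop :=
  ∃ f : V → Y, Function.Injective f ∧ ∃ r : ℝ, 0 < r ∧
    ∀ a b, r * dV a b ≤ dY (f a) (f b) ∧ dY (f a) (f b) ≤ K * (r * dV a b)


/-- The diameter of a space with respect to an explicit distance function. -/
def diamOf {α : Type*} (d : α → α → ℝ) : ℝ :=
  ⨆ p : α × α, d p.1 p.2

/-- The minimal positive distance `min_{x ≠ y} d (x, y)`. -/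
def minSep {α : Type*} (d : α → α → ℝ) : ℝ :=
  ⨅ p : { p : α × α // p.1 ≠ p.2 }, d p.1.1 p.1.2

/-- The normalizing factor `γ = (max_z diam N_z) / (min_{x ≠ y} d_M (x, y))` of the metric
composition. -/
def gam {M : Type*} (N : M → Type*) (dM : M → M → ℝ) (dN : ∀ x, N x → N x → ℝ) : ℝ :=
  (⨆ x : M, diamOf (dN x)) / minSep dM

/-- The distance function `d_β` of the metric composition `M_β[𝒩]` on the disjoint union
`Σ x, N x`. -/
def comp {M : Type*} {N : M → Type*} (β : ℝ) (dM : M → M → ℝ) (dN : ∀ x, N x → N x → ℝ) :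
    (Σ x, N x) → (Σ x, N x) → ℝ :=
  fun p q =>
    if h : p.1 = q.1 then dN p.1 p.2 (cast (congrArg N h.symm) q.2)
    else β * gam N dM dN * dM p.1 q.1


/-!
If every last-generation edge of `D n` stayed inside one fibre, connectedness of the diamond
would put all of `φ (W n)` into a single `N x`, with distortion at most `A / B`. So some such
edge, of length at most `(1/2 + ε)^n`, joins two fibres; as distances between fibres are at least
half the largest fibre diameter, every `N x` has diameter at most `2 A (1/2 + ε)^n`.

With `k = ⌊√n⌋`, the `2^k` neighbours of the pole of `D k` stay pairwise at distance exactly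
`2 (1/2 + ε)^k` in `W n`: the lower bound is witnessed by a `±` potential on two midpoints,
extended to the later generations by averaging, which keeps it `1`-Lipschitz along edges.
If two of these points share a fibre, the diameter bound gives `A / B ≥ (1/2 + ε)^(k - n)`.
Otherwise their fibres are `2^k` points of `M` whose pairwise distances have ratio at most
`A / B`; embedding them in `ℓ₂^d` and comparing volumes of disjoint balls gives
`2^k ≤ (2 C (A / B) + 1)^d`.
-/

section ShortestPath

variable {V : Type*} {c : V → V → ℝ≥0∞}

lemma spDist_le_walkCost {u v : V} (l : List V) (hu : l.head? = some u)
    (hv : l.getLast? = some v) : spDist c u v ≤ walkCost c l :=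
  iInf_le_of_le ⟨l, hu, hv⟩ le_rfl

lemma spDist_le_single (u v : V) : spDist c u v ≤ c u v := by
  simpa [walkCost] using spDist_le_walkCost (c := c) [u, v] rfl rfl

lemma walkCost_concat : ∀ {l : List V} {a : V}, l.getLast? = some a → ∀ b,
    walkCost c (l ++ [b]) = walkCost c l + c a b
  | [], _, h, _ => by simp at h
  | [x], a, h, b => by
    obtain rfl : x = a := by simpa using h
    simp [walkCost]
  | x :: y :: l, a, h, b => by
    rw [List.getLast?_cons_cons] at h
    simp only [List.cons_append, walkCost]
    rw [← List.cons_append, walkCost_concat h, add_assoc]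

lemma spDist_le_spDist_add (u v w : V) : spDist c u w ≤ spDist c u v + c v w := by
  calc spDist c u w
      ≤ ⨅ p : {l : List V // l.head? = some u ∧ l.getLast? = some v}, walkCost c (p.1 ++ [w]) :=
        le_iInf fun p => spDist_le_walkCost _ (by simp [List.head?_append, p.2.1]) (by simp)
    _ = spDist c u v + c v w := by
        rw [spDist, ENNReal.iInf_add]
        exact iInf_congr fun p => walkCost_concat p.2.2 w

lemma spDist_ne_top_of_reflTransGen {u v : V}
    (h : Relation.ReflTransGen (fun a b => c a b ≠ ⊤) u v) : spDist c u v ≠ ⊤ := by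
  induction h with
  | refl =>
    refine ne_top_of_le_ne_top ENNReal.zero_ne_top ?_
    simpa [walkCost] using spDist_le_walkCost (c := c) [u] rfl rfl
  | tail _ hbc ih =>
    exact ne_top_of_le_ne_top (ENNReal.add_ne_top.2 ⟨ih, hbc⟩) (spDist_le_spDist_add _ _ _)

lemma edist_le_walkCost {α : Type*} [PseudoEMetricSpace α] {g : V → α}
    (hg : ∀ a b, edist (g a) (g b) ≤ c a b) :
    ∀ {l : List V} {u v : V}, l.head? = some u → l.getLast? = some v →
      edist (g u) (g v) ≤ walkCost c l
  | [], _, _, hu, _ => by simp at hu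
  | [x], u, v, hu, hv => by
    obtain rfl : x = u := by simpa using hu
    obtain rfl : x = v := by simpa using hv
    simp
  | x :: y :: l, u, v, hu, hv => by
    obtain rfl : x = u := by simpa using hu
    rw [List.getLast?_cons_cons] at hv
    calc edist (g x) (g v) ≤ edist (g x) (g y) + edist (g y) (g v) := edist_triangle _ _ _
      _ ≤ c x y + walkCost c (y :: l) := add_le_add (hg x y) (edist_le_walkCost hg rfl hv)

lemma edist_le_spDist {α : Type*} [PseudoEMetricSpace α] {g : V → α}
    (hg : ∀ a b, edist (g a) (g b) ≤ c a b) (u v : V) : edist (g u) (g v) ≤ spDist c u v :=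
  le_iInf fun p => edist_le_walkCost hg p.2.1 p.2.2

end ShortestPath

section Diamond

lemma edgeAt_of_dEdge : ∀ {n : ℕ} {u v : Vert n}, dEdge n u v → edgeAt n n u v
  | 0, _, _, h => ⟨rfl, h⟩
  | _ + 1, _, _, h => Or.inl ⟨rfl, h⟩

lemma edgeAt_le : ∀ {n k : ℕ} {u v : Vert n}, edgeAt n k u v → k ≤ n
  | 0, _, _, _, h => h.1.le
  | _ + 1, _, _, _, Or.inl h => h.1.le
  | _ + 1, _, _, _, Or.inr ⟨_, _, _, _, h⟩ => (edgeAt_le h).trans (Nat.le_succ _)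

lemma edgeAt_inl {n k : ℕ} {u v : Vert n} (h : edgeAt n k u v) :
    edgeAt (n + 1) k (Sum.inl u) (Sum.inl v) :=
  Or.inr ⟨u, v, rfl, rfl, h⟩

lemma eqvGen_dEdge : ∀ (n : ℕ) (u v : Vert n), Relation.EqvGen (dEdge n) u v
  | 0, u, v => by
    have h : ∀ w : Vert 0, Relation.EqvGen (dEdge 0) (0 : Fin 2) w
      | (0 : Fin 2) => .refl _
      | (1 : Fin 2) => .rel _ _ ⟨rfl, rfl⟩
    exact (h u).symm.trans _ _ _ (h v)
  | n + 1, u, v => by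
    have lift {a b : Vert n} (h : Relation.EqvGen (dEdge n) a b) :
        Relation.EqvGen (dEdge (n + 1)) (Sum.inl a) (Sum.inl b) := by
      induction h with
      | rel a b h =>
        exact .trans _ (Sum.inr (⟨(a, b), h⟩, true)) _
          (.rel _ _ ⟨_, true, Or.inl ⟨rfl, rfl⟩⟩) (.rel _ _ ⟨_, true, Or.inr ⟨rfl, rfl⟩⟩)
      | refl => exact .refl _
      | symm _ _ _ ih => exact ih.symm
      | trans _ _ _ _ _ ih₁ ih₂ => exact ih₁.trans _ _ _ ih₂
    have toInl : ∀ w : Vert (n + 1), ∃ a, Relation.EqvGen (dEdge (n + 1)) (Sum.inl a) w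
      | Sum.inl a => ⟨a, .refl _⟩
      | Sum.inr (e, b) => ⟨e.1.1, .rel _ _ ⟨e, b, Or.inl ⟨rfl, rfl⟩⟩⟩
    obtain ⟨a, ha⟩ := toInl u
    obtain ⟨b, hb⟩ := toInl v
    exact ha.symm.trans _ _ _ ((lift (eqvGen_dEdge n a b)).trans _ _ _ hb)

lemma apply_eq_of_dEdge {α : Type*} {n : ℕ} {F : Vert n → α}
    (hF : ∀ a b, dEdge n a b → F a = F b) (u v : Vert n) : F u = F v :=
  (Setoid.ker F).iseqv.eqvGen_iff.1 (Relation.EqvGen.mono hF u v (eqvGen_dEdge n u v))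

end Diamond

section WeightedDiamond

variable {ε : ℝ} {n : ℕ}

lemma wCost_comm (u v : Vert n) : wCost ε n u v = wCost ε n v u := by
  simp only [wCost, or_comm]

lemma wCost_le_of_edgeAt {k : ℕ} {u v : Vert n} (h : edgeAt n k u v ∨ edgeAt n k v u) :
    wCost ε n u v ≤ ENNReal.ofReal ((1 / 2 + ε) ^ k) :=
  iInf₂_le k h

-- `dW` takes `toReal`, which would send an infinite `spDist` to `0`.
lemma spDist_wCost_ne_top (u v : Vert n) : spDist (wCost ε n) u v ≠ ⊤ := by
  let r : Vert n → Vert n → Prop := fun a b => wCost ε n a b ≠ ⊤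
  have : Std.Symm r := ⟨fun a b h => by simpa only [r, wCost_comm] using h⟩
  have hequiv : Equivalence (Relation.ReflTransGen r) :=
    ⟨fun _ => .refl, fun h => Std.Symm.symm _ _ h, .trans⟩
  refine spDist_ne_top_of_reflTransGen (hequiv.eqvGen_iff.1 ?_)
  refine Relation.EqvGen.mono (fun a b h => ?_) u v (eqvGen_dEdge n u v)
  exact .single (ne_top_of_le_ne_top ENNReal.ofReal_ne_top
    (wCost_le_of_edgeAt (Or.inl (edgeAt_of_dEdge h))))

lemma dW_le_of_edgeAt (hε0 : 0 < ε) {k : ℕ} {u v : Vert n}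
    (h : edgeAt n k u v ∨ edgeAt n k v u) : dW ε n u v ≤ (1 / 2 + ε) ^ k :=
  ENNReal.toReal_le_of_le_ofReal (by positivity)
    ((spDist_le_single u v).trans (wCost_le_of_edgeAt h))

lemma dW_le_of_dEdge (hε0 : 0 < ε) {u v : Vert n} (h : dEdge n u v) :
    dW ε n u v ≤ (1 / 2 + ε) ^ n :=
  dW_le_of_edgeAt hε0 (.inl (edgeAt_of_dEdge h))

lemma dW_le_two_mul_of_edgeAt (hε0 : 0 < ε) {k : ℕ} {p u w : Vert n}
    (hu : edgeAt n k p u) (hw : edgeAt n k p w) : dW ε n u w ≤ 2 * (1 / 2 + ε) ^ k := by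
  refine ENNReal.toReal_le_of_le_ofReal (by positivity) ?_
  calc spDist (wCost ε n) u w ≤ wCost ε n u p + wCost ε n p w :=
        (spDist_le_spDist_add u p w).trans (add_le_add_left (spDist_le_single u p) _)
    _ ≤ ENNReal.ofReal ((1 / 2 + ε) ^ k) + ENNReal.ofReal ((1 / 2 + ε) ^ k) :=
        add_le_add (wCost_le_of_edgeAt (Or.inr hu)) (wCost_le_of_edgeAt (Or.inl hw))
    _ = ENNReal.ofReal (2 * (1 / 2 + ε) ^ k) := by
        rw [← ENNReal.ofReal_add (by positivity) (by positivity), two_mul]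

def EdgeLipschitz (ε : ℝ) (n : ℕ) (g : Vert n → ℝ) : Prop :=
  ∀ k u v, edgeAt n k u v → |g u - g v| ≤ (1 / 2 + ε) ^ k

lemma EdgeLipschitz.abs_sub_le_dW {g : Vert n → ℝ} (hg : EdgeLipschitz ε n g) (u v : Vert n) :
    |g u - g v| ≤ dW ε n u v := by
  have hedge (a b : Vert n) : edist (g a) (g b) ≤ wCost ε n a b := by
    refine le_iInf₂ fun k h => ?_
    rw [edist_dist, Real.dist_eq]
    refine ENNReal.ofReal_le_ofReal ?_
    rcases h with h | h
    · exact hg k a b h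
    · exact abs_sub_comm (g a) (g b) ▸ hg k b a h
  have := edist_le_spDist hedge u v
  rwa [edist_dist, Real.dist_eq, ENNReal.ofReal_le_iff_le_toReal (spDist_wCost_ne_top u v)] at this

lemma edgeLipschitz_of_nonneg_of_le (hε0 : 0 < ε) (hε : ε < 1 / 2) {g : Vert n → ℝ}
    (h₀ : ∀ w, 0 ≤ g w) (h₁ : ∀ w, g w ≤ (1 / 2 + ε) ^ n) : EdgeLipschitz ε n g :=
  fun _ u v h => (abs_sub_le_of_nonneg_of_le (h₀ u) (h₁ u) (h₀ v) (h₁ v)).trans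
    (pow_le_pow_of_le_one (by linarith) (by linarith) (edgeAt_le h))

lemma dW_pos (hε0 : 0 < ε) (hε : ε < 1 / 2) {u v : Vert n} (huv : u ≠ v) : 0 < dW ε n u v := by
  let g : Vert n → ℝ := fun w => if w = u then (1 / 2 + ε) ^ n else 0
  have hg : EdgeLipschitz ε n g := edgeLipschitz_of_nonneg_of_le hε0 hε
    (fun w => by dsimp only [g]; split_ifs <;> positivity)
    (fun w => by dsimp only [g]; split_ifs <;> [exact le_rfl; positivity])
  calc 0 < (1 / 2 + ε) ^ n := by positivity
    _ = |g u - g v| := by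
        simp only [g, if_pos rfl, if_neg huv.symm, sub_zero]
        exact (abs_of_pos (by positivity)).symm
    _ ≤ dW ε n u v := hg.abs_sub_le_dW u v

end WeightedDiamond

section SeparatedPoints

variable {ε : ℝ}

-- Every edge of `W (m + 1)` has an endpoint among the old vertices `Sum.inl _`.
lemma edgeLipschitz_of_inl_eq_zero (hε0 : 0 < ε) {m : ℕ} {g : Vert (m + 1) → ℝ}
    (hinl : ∀ a : Vert m, g (Sum.inl a) = 0) (hle : ∀ w, |g w| ≤ (1 / 2 + ε) ^ (m + 1)) :
    EdgeLipschitz ε (m + 1) g := by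
  rintro k u v (⟨rfl, e, b, ⟨hu, -⟩ | ⟨-, hv⟩⟩ | ⟨u', v', hu, hv, -⟩)
  · rw [show g u = 0 from hu ▸ hinl _, zero_sub, abs_neg]; exact hle v
  · rw [show g v = 0 from hv ▸ hinl _, sub_zero]; exact hle u
  · rw [show g u = 0 from hu ▸ hinl _, show g v = 0 from hv ▸ hinl _, sub_self, abs_zero]
    positivity

lemma exists_edgeLipschitz_sub_inr_eq (hε0 : 0 < ε) {m : ℕ}
    {x y : {e : Vert m × Vert m // dEdge m e.1 e.2} × Bool} (hxy : x ≠ y) :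
    ∃ g : Vert (m + 1) → ℝ, EdgeLipschitz ε (m + 1) g ∧
      g (Sum.inr x) - g (Sum.inr y) = 2 * (1 / 2 + ε) ^ (m + 1) := by
  set c : ℝ := (1 / 2 + ε) ^ (m + 1)
  have hc : 0 < c := by positivity
  let g : Vert (m + 1) → ℝ := fun w =>
    if w = Sum.inr x then c else if w = Sum.inr y then -c else 0
  refine ⟨g, edgeLipschitz_of_inl_eq_zero hε0 (fun a => ?_) fun w => ?_, ?_⟩
  · exact (if_neg Sum.inl_ne_inr).trans (if_neg Sum.inl_ne_inr)
  · show |g w| ≤ c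
    simp only [g]
    split_ifs <;> simp [abs_of_pos hc, hc.le]
  · calc g (Sum.inr x) - g (Sum.inr y) = c - -c :=
          congrArg₂ (· - ·) (if_pos rfl)
            ((if_neg (Sum.inr_injective.ne hxy).symm).trans (if_pos rfl))
      _ = 2 * c := by ring

def midpointExtension {n : ℕ} (g : Vert n → ℝ) : Vert (n + 1) → ℝ :=
  Sum.elim g fun z => (g z.1.1.1 + g z.1.1.2) / 2

lemma EdgeLipschitz.midpointExtension (hε0 : 0 < ε) {n : ℕ} {g : Vert n → ℝ}
    (hg : EdgeLipschitz ε n g) : EdgeLipschitz ε (n + 1) (midpointExtension g) := by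
  have half (e : {e : Vert n × Vert n // dEdge n e.1 e.2}) :
      |(g e.1.1 - g e.1.2) / 2| ≤ (1 / 2 + ε) ^ (n + 1) := by
    have := hg n _ _ (edgeAt_of_dEdge e.2)
    rw [abs_div, abs_two, pow_succ]
    nlinarith [pow_pos (by linarith : (0 : ℝ) < 1 / 2 + ε) n]
  rintro k u v (⟨rfl, e, b, ⟨rfl, rfl⟩ | ⟨rfl, rfl⟩⟩ | ⟨u', v', rfl, rfl, h⟩)
  · show |g e.1.1 - (g e.1.1 + g e.1.2) / 2| ≤ _
    convert half e using 2
    ring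
  · show |(g e.1.1 + g e.1.2) / 2 - g e.1.2| ≤ _
    convert half e using 2
    ring
  · exact hg k u' v' h

def pole : (n : ℕ) → Vert n
  | 0 => (0 : Fin 2)
  | n + 1 => Sum.inl (pole n)

/-- `σ` picks, generation by generation, one of the two midpoints of the edge at the pole. -/
def poleNeighbor : (k : ℕ) → (Fin k → Bool) → {v : Vert k // dEdge k (pole k) v}
  | 0, _ => ⟨(1 : Fin 2), rfl, rfl⟩
  | k + 1, σ =>
    ⟨Sum.inr (⟨(pole k, (poleNeighbor k (Fin.init σ)).1), (poleNeighbor k (Fin.init σ)).2⟩,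
      σ (Fin.last k)), _, _, Or.inl ⟨rfl, rfl⟩⟩

lemma poleNeighbor_injective : ∀ k, Function.Injective fun σ => (poleNeighbor k σ).1
  | 0 => fun σ τ _ => Subsingleton.elim σ τ
  | k + 1 => fun σ τ h => by
    obtain ⟨hedge, hlast⟩ := Prod.mk.inj (Sum.inr_injective h)
    have hinit := poleNeighbor_injective k (Prod.mk.inj (Subtype.mk.inj hedge)).2
    rw [← Fin.snoc_init_self σ, ← Fin.snoc_init_self τ, hinit, hlast]

lemma exists_separated_neighbors (hε0 : 0 < ε) (m : ℕ) :
    ∀ n, m + 1 ≤ n → ∃ (p : Vert n) (v : (Fin (m + 1) → Bool) → Vert n),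
      (∀ σ, edgeAt n (m + 1) p (v σ)) ∧
      ∀ σ τ, σ ≠ τ → ∃ g : Vert n → ℝ, EdgeLipschitz ε n g ∧
        g (v σ) - g (v τ) = 2 * (1 / 2 + ε) ^ (m + 1) := by
  refine Nat.le_induction ?_ fun n _ ⟨p, v, hpv, hsep⟩ => ?_
  · refine ⟨pole (m + 1), fun σ => (poleNeighbor (m + 1) σ).1,
      fun σ => edgeAt_of_dEdge (poleNeighbor (m + 1) σ).2, fun σ τ hστ => ?_⟩
    exact exists_edgeLipschitz_sub_inr_eq hε0 fun h =>
      (poleNeighbor_injective (m + 1)).ne hστ (congrArg Sum.inr h)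
  · refine ⟨Sum.inl p, fun σ => Sum.inl (v σ), fun σ => edgeAt_inl (hpv σ), fun σ τ hστ => ?_⟩
    obtain ⟨g, hg, hgv⟩ := hsep σ τ hστ
    exact ⟨midpointExtension g, hg.midpointExtension hε0, hgv⟩

lemma exists_pairwise_dW_eq (hε0 : 0 < ε) {k n : ℕ} (hk : 0 < k) (hkn : k ≤ n) :
    ∃ v : (Fin k → Bool) → Vert n,
      Pairwise fun σ τ => dW ε n (v σ) (v τ) = 2 * (1 / 2 + ε) ^ k := by
  obtain ⟨m, rfl⟩ : ∃ m, k = m + 1 := ⟨k - 1, by omega⟩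
  obtain ⟨p, v, hpv, hsep⟩ := exists_separated_neighbors hε0 m n hkn
  refine ⟨v, fun σ τ hστ => le_antisymm (dW_le_two_mul_of_edgeAt hε0 (hpv σ) (hpv τ)) ?_⟩
  obtain ⟨g, hg, hgv⟩ := hsep σ τ hστ
  calc 2 * (1 / 2 + ε) ^ (m + 1) = |g (v σ) - g (v τ)| := by
        rw [hgv, abs_of_pos (by positivity)]
    _ ≤ dW ε n (v σ) (v τ) := hg.abs_sub_le_dW _ _

end SeparatedPoints

section MetricComposition

variable {M : Type*} {N : M → Type*} {β : ℝ}

lemma le_diamOf {α : Type*} [Finite α] (d : α → α → ℝ) (a b : α) : d a b ≤ diamOf d :=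
  le_ciSup (f := fun p : α × α => d p.1 p.2) (Set.finite_range _).bddAbove (a, b)

lemma comp_mk_mk (dM : M → M → ℝ) (dN : ∀ x, N x → N x → ℝ) (x : M) (a b : N x) :
    comp β dM dN ⟨x, a⟩ ⟨x, b⟩ = dN x a b :=
  dif_pos rfl

lemma comp_of_fst_ne (dM : M → M → ℝ) (dN : ∀ x, N x → N x → ℝ) {p q : Σ x, N x}
    (h : p.1 ≠ q.1) : comp β dM dN p q = β * gam N dM dN * dM p.1 q.1 :=
  dif_neg h

lemma comp_le_iSup_diamOf [Finite M] [∀ x, Finite (N x)] (dM : M → M → ℝ)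
    (dN : ∀ x, N x → N x → ℝ) {p q : Σ x, N x} (h : p.1 = q.1) :
    comp β dM dN p q ≤ ⨆ x, diamOf (dN x) := by
  rw [comp, dif_pos h]
  exact (le_diamOf _ _ _).trans
    (le_ciSup (f := fun x => diamOf (dN x)) (Set.finite_range _).bddAbove p.1)

variable [MetricSpace M]

lemma mul_gam_pos_of_comp_pos (dN : ∀ x, N x → N x → ℝ) {p q : Σ x, N x} (h : p.1 ≠ q.1)
    (hpos : 0 < comp β (fun a b : M => dist a b) dN p q) :
    0 < β * gam N (fun a b : M => dist a b) dN := by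
  rw [comp_of_fst_ne _ _ h] at hpos
  exact pos_of_mul_pos_left hpos dist_nonneg

lemma minSep_pos [Finite M] {x y : M} (hxy : x ≠ y) : 0 < minSep (fun a b : M => dist a b) := by
  have : Nonempty {p : M × M // p.1 ≠ p.2} := ⟨⟨(x, y), hxy⟩⟩
  obtain ⟨q, hq⟩ := Finite.exists_min fun p : {p : M × M // p.1 ≠ p.2} => dist p.1.1 p.1.2
  exact (dist_pos.2 q.2).trans_le (le_ciInf hq)

lemma minSep_le {x y : M} (hxy : x ≠ y) : minSep (fun a b : M => dist a b) ≤ dist x y :=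
  ciInf_le ⟨0, by rintro _ ⟨p, rfl⟩; exact dist_nonneg⟩ (⟨(x, y), hxy⟩ : {p : M × M // p.1 ≠ p.2})

lemma iSup_diamOf_le_two_mul_comp [Finite M] [∀ x, MetricSpace (N x)] (hβ : 1 / 2 ≤ β)
    {p q : Σ x, N x} (h : p.1 ≠ q.1) :
    ⨆ x, diamOf (fun a b : N x => dist a b) ≤
      2 * comp β (fun a b : M => dist a b) (fun x (a b : N x) => dist a b) p q := by
  set S := ⨆ x, diamOf (fun a b : N x => dist a b)
  set m := minSep (fun a b : M => dist a b)
  have hS : 0 ≤ S := Real.iSup_nonneg fun _ => Real.iSup_nonneg fun _ => dist_nonneg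
  have hm : 0 < m := minSep_pos h
  have hratio : 0 ≤ S / m * dist p.1 q.1 := by positivity
  rw [comp_of_fst_ne _ _ h, gam]
  calc S = S / m * m := (div_mul_cancel₀ S hm.ne').symm
    _ ≤ S / m * dist p.1 q.1 := mul_le_mul_of_nonneg_left (minSep_le h) (by positivity)
    _ ≤ 2 * β * (S / m * dist p.1 q.1) := le_mul_of_one_le_left hratio (by linarith)
    _ = 2 * (β * (S / m) * dist p.1 q.1) := by ring

end MetricComposition

section Packing

open MeasureTheory Metric

variable {E : Type*} [NormedAddCommGroup E] [NormedSpace ℝ E] [FiniteDimensional ℝ E]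
  {ι : Type*} [Fintype ι]

lemma card_le_of_pairwise_dist (z : ι → E) {ρ R : ℝ} (hρ : 0 < ρ) (hR : 0 ≤ R)
    (hsep : Pairwise fun i j => ρ ≤ dist (z i) (z j))
    (hdiam : Pairwise fun i j => dist (z i) (z j) ≤ R) :
    (Fintype.card ι : ℝ) ≤ (2 * R / ρ + 1) ^ Module.finrank ℝ E := by
  rcases isEmpty_or_nonempty ι with hι | ⟨⟨i₀⟩⟩
  · simp only [Fintype.card_eq_zero, Nat.cast_zero]
    positivity
  borelize E
  let μ : Measure E := Measure.addHaar
  set d := Module.finrank ℝ E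
  set u := μ (ball 0 1)
  have hu₀ : u ≠ 0 := (measure_ball_pos μ _ one_pos).ne'
  have hu : u ≠ ⊤ := measure_ball_lt_top.ne
  have hvol (x : E) {r : ℝ} (hr : 0 < r) : μ (ball x r) = ENNReal.ofReal (r ^ d) * u :=
    Measure.addHaar_ball_of_pos μ x hr
  have hdisj : Set.PairwiseDisjoint (Finset.univ : Finset ι) fun i => ball (z i) (ρ / 2) :=
    fun i _ j _ hij => ball_disjoint_ball (by linarith [hsep hij])
  have hsub : (⋃ i ∈ (Finset.univ : Finset ι), ball (z i) (ρ / 2)) ⊆ ball (z i₀) (R + ρ / 2) := by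
    simp only [Finset.mem_univ, Set.iUnion_true, Set.iUnion_subset_iff]
    intro i y hy
    have hi : dist (z i) (z i₀) ≤ R := by
      rcases eq_or_ne i i₀ with rfl | hne
      · simpa using hR
      · exact hdiam hne
    exact mem_ball.2 (by linarith [dist_triangle y (z i) (z i₀), mem_ball.1 hy])
  have key : (Fintype.card ι : ℝ≥0∞) * ENNReal.ofReal ((ρ / 2) ^ d) * u ≤
      ENNReal.ofReal ((R + ρ / 2) ^ d) * u := by
    calc (Fintype.card ι : ℝ≥0∞) * ENNReal.ofReal ((ρ / 2) ^ d) * u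
        = ∑ i : ι, μ (ball (z i) (ρ / 2)) := by
          simp only [hvol _ (half_pos hρ), Finset.sum_const, Finset.card_univ, nsmul_eq_mul,
            mul_assoc]
      _ = μ (⋃ i ∈ (Finset.univ : Finset ι), ball (z i) (ρ / 2)) :=
          (measure_biUnion_finset hdisj fun _ _ => measurableSet_ball).symm
      _ ≤ μ (ball (z i₀) (R + ρ / 2)) := measure_mono hsub
      _ = ENNReal.ofReal ((R + ρ / 2) ^ d) * u := hvol _ (by positivity)
  rw [ENNReal.mul_le_mul_iff_left hu₀ hu, ← ENNReal.ofReal_natCast,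
    ← ENNReal.ofReal_mul (by positivity), ENNReal.ofReal_le_ofReal_iff (by positivity),
    ← le_div_iff₀ (by positivity), ← div_pow] at key
  calc (Fintype.card ι : ℝ) ≤ ((R + ρ / 2) / (ρ / 2)) ^ d := key
    _ = (2 * R / ρ + 1) ^ d := by field_simp

variable {M : Type*} [MetricSpace M]

lemma card_le_of_embedsM {C : ℝ} (hM : embedsM C (fun a b : M => dist a b)
      (fun a b : E => ‖a - b‖)) (hC : 0 ≤ C)
    (x : ι → M) {ρ R : ℝ} (hρ : 0 < ρ) (hR : 0 ≤ R)
    (hsep : Pairwise fun i j => ρ ≤ dist (x i) (x j))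
    (hdiam : Pairwise fun i j => dist (x i) (x j) ≤ R) :
    (Fintype.card ι : ℝ) ≤ (2 * C * (R / ρ) + 1) ^ Module.finrank ℝ E := by
  obtain ⟨f, -, r, hr, hf⟩ := hM
  have hlo (i j : ι) : r * dist (x i) (x j) ≤ dist (f (x i)) (f (x j)) := by
    rw [dist_eq_norm]; exact (hf _ _).1
  have hhi (i j : ι) : dist (f (x i)) (f (x j)) ≤ C * (r * dist (x i) (x j)) := by
    rw [dist_eq_norm]; exact (hf _ _).2
  have := card_le_of_pairwise_dist (f ∘ x) (mul_pos hr hρ) (by positivity : 0 ≤ C * (r * R))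
    (fun i j hij => (mul_le_mul_of_nonneg_left (hsep hij) hr.le).trans (hlo i j))
    (fun i j hij => (hhi i j).trans
      (mul_le_mul_of_nonneg_left (mul_le_mul_of_nonneg_left (hdiam hij) hr.le) hC))
  convert this using 3
  field_simp

end Packing

lemma embedsM_div_of_bounds {V Y : Type*} {dV : V → V → ℝ} {dY : Y → Y → ℝ} {f : V → Y}
    {A B : ℝ} (hdV : ∀ a b, a ≠ b → 0 < dV a b) (hdY : ∀ y, dY y y = 0) (hB : 0 < B)
    (h : ∀ a b, B * dV a b ≤ dY (f a) (f b) ∧ dY (f a) (f b) ≤ A * dV a b) :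
    embedsM (A / B) dV dY := by
  refine ⟨f, fun a b hab => ?_, B, hB, fun a b => ⟨(h a b).1, ?_⟩⟩
  · by_contra hne
    have := (h a b).1
    rw [hab, hdY] at this
    exact (mul_pos hB (hdV a b hne)).not_ge this
  · calc dY (f a) (f b) ≤ A * dV a b := (h a b).2
      _ = A / B * (B * dV a b) := by field_simp

lemma card_le_of_comp_bounds {E : Type*} [NormedAddCommGroup E] [NormedSpace ℝ E]
    [FiniteDimensional ℝ E] {M : Type*} [MetricSpace M] {N : M → Type*}
    {dN : ∀ x, N x → N x → ℝ} {ι : Type*} [Fintype ι] {C β A B t : ℝ}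
    (hM : embedsM C (fun a b : M => dist a b) (fun a b : E => ‖a - b‖)) (hC : 0 ≤ C)
    (hA : 0 ≤ A) (hB : 0 < B) (ht : 0 < t) (hκ : 0 < β * gam N (fun a b : M => dist a b) dN)
    (p : ι → Σ x, N x) (hfst : Pairwise fun i j => (p i).1 ≠ (p j).1)
    (hbd : Pairwise fun i j => B * t ≤ comp β (fun a b : M => dist a b) dN (p i) (p j) ∧
      comp β (fun a b : M => dist a b) dN (p i) (p j) ≤ A * t) :
    (Fintype.card ι : ℝ) ≤ (2 * C * (A / B) + 1) ^ Module.finrank ℝ E := by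
  set κ := β * gam N (fun a b : M => dist a b) dN
  have hbd' : Pairwise fun i j =>
      B * t / κ ≤ dist (p i).1 (p j).1 ∧ dist (p i).1 (p j).1 ≤ A * t / κ := fun i j hij => by
    have : B * t ≤ κ * dist (p i).1 (p j).1 ∧ κ * dist (p i).1 (p j).1 ≤ A * t := by
      simpa only [comp_of_fst_ne _ _ (hfst hij)] using hbd hij
    exact ⟨(div_le_iff₀' hκ).2 this.1, (le_div_iff₀' hκ).2 this.2⟩
  have := card_le_of_embedsM hM hC (fun i => (p i).1) (by positivity) (by positivity)
    (fun _ _ h => (hbd' h).1) (fun _ _ h => (hbd' h).2)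
  rwa [div_div_div_cancel_right₀ hκ.ne', mul_div_mul_right _ _ ht.ne'] at this

lemma exists_eq_mk_of_fst_eq {V M : Type*} {N : M → Type*} {φ : V → Σ x, N x} {x : M}
    (h : ∀ u, (φ u).1 = x) : ∃ f : V → N x, ∀ u, φ u = ⟨x, f u⟩ :=
  ⟨fun u => h u ▸ (φ u).2, fun u => Sigma.ext (h u) (eqRec_heq _ _).symm⟩

lemma exists_dEdge_fst_ne {M : Type*} {N : M → Type*} [∀ x, MetricSpace (N x)]
    {dM : M → M → ℝ} {ε β A B : ℝ} {n : ℕ} (hε0 : 0 < ε) (hε : ε < 1 / 2) (hB : 0 < B)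
    (hN : ∀ x, ¬ embedsM (A / B) (dW ε n) (fun a b : N x => dist a b))
    {φ : Vert n → Σ x, N x}
    (hφ : ∀ u v, B * dW ε n u v ≤ comp β dM (fun x (a b : N x) => dist a b) (φ u) (φ v) ∧
      comp β dM (fun x (a b : N x) => dist a b) (φ u) (φ v) ≤ A * dW ε n u v) :
    ∃ a c, dEdge n a c ∧ (φ a).1 ≠ (φ c).1 := by
  by_contra! hfst
  obtain ⟨f, hf⟩ := exists_eq_mk_of_fst_eq fun u => apply_eq_of_dEdge hfst u (pole n)
  refine hN _ (embedsM_div_of_bounds (f := f) (fun _ _ => dW_pos hε0 hε) (fun _ => dist_self _)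
    hB fun u v => ?_)
  simpa only [hf, comp_mk_mk] using hφ u v

theorem statement14_general {M : Type*} [MetricSpace M] [Fintype M]
    (ε : ℝ) (hε0 : 0 < ε) (hε : ε < 1 / 2) (n d : ℕ) (C A B : ℝ)
    (hC : 1 ≤ C) (hA : 0 < A) (hB : 0 < B)
    (hM : embedsM C (fun a b : M => dist a b)
      (fun a b : EuclideanSpace ℝ (Fin d) => ‖a - b‖))
    (β : ℝ) (hβ : 1 / 2 ≤ β)
    (N : M → Type*) [∀ x, MetricSpace (N x)] [∀ x, Fintype (N x)]
    (hN : ∀ x : M, ¬ embedsM (A / B) (dW ε n) (fun a b : N x => dist a b))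
    (φ : Vert n → Σ x : M, N x)
    (hφ : ∀ u₁ u₂ : Vert n,
      B * dW ε n u₁ u₂ ≤
        comp β (fun a b : M => dist a b) (fun x (a b : N x) => dist a b) (φ u₁) (φ u₂) ∧
      comp β (fun a b : M => dist a b) (fun x (a b : N x) => dist a b) (φ u₁) (φ u₂) ≤
        A * dW ε n u₁ u₂) :
    (2 : ℝ) ^ (Nat.sqrt n) ≤ (2 * C * (A / B) + 1) ^ d ∨
      (1 / 2 + ε) ^ ((Nat.sqrt n : ℤ) - (n : ℤ)) ≤ A / B := by
  rcases (Nat.sqrt n).eq_zero_or_pos with hk | hk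
  · left
    rw [hk, pow_zero]
    exact one_le_pow₀ (le_add_of_nonneg_left (by positivity))
  obtain ⟨a, c, hac, hfst⟩ := exists_dEdge_fst_ne hε0 hε hB hN hφ
  have hdiam : ⨆ x, diamOf (fun a b : N x => dist a b) ≤ 2 * (A * (1 / 2 + ε) ^ n) := by
    grw [iSup_diamOf_le_two_mul_comp hβ hfst, (hφ a c).2, dW_le_of_dEdge hε0 hac]
  have hκ := mul_gam_pos_of_comp_pos _ hfst <|
    (mul_pos hB (dW_pos hε0 hε (ne_of_apply_ne (fun u => (φ u).1) hfst))).trans_le (hφ a c).1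
  obtain ⟨v, hv⟩ := exists_pairwise_dW_eq hε0 hk (Nat.sqrt_le_self n)
  by_cases hsame : ∃ σ τ, σ ≠ τ ∧ (φ (v σ)).1 = (φ (v τ)).1
  · right
    obtain ⟨σ, τ, hστ, hfib⟩ := hsame
    have key : B * (2 * (1 / 2 + ε) ^ Nat.sqrt n) ≤ 2 * (A * (1 / 2 + ε) ^ n) :=
      calc B * (2 * (1 / 2 + ε) ^ Nat.sqrt n) = B * dW ε n (v σ) (v τ) := by rw [hv hστ]
        _ ≤ _ := (hφ _ _).1
        _ ≤ _ := comp_le_iSup_diamOf _ _ hfib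
        _ ≤ _ := hdiam
    rw [zpow_sub₀ (by positivity), zpow_natCast, zpow_natCast,
      div_le_div_iff₀ (by positivity) hB]
    linarith
  · left
    push Not at hsame
    have := card_le_of_comp_bounds (t := 2 * (1 / 2 + ε) ^ Nat.sqrt n) hM (by linarith) hA.le hB
      (by positivity) hκ (fun σ => φ (v σ)) (fun σ τ h => hsame σ τ h)
      fun σ τ h => by simpa only [hv h] using hφ (v σ) (v τ)
    simpa [finrank_euclideanSpace_fin] using this

/-- Suppose `M` is a finite metric space that is `C`-embeddable into the
`d`-dimensional Euclidean space, `β ≥ 1/2`, and `𝒩 = {N x}` is a family of finite metric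
spaces such that `W n` admits no embedding of distortion `≤ A/B` into any `N x`.  If
`φ : W n → M_β[𝒩]` satisfies `B · d_{W_n} ≤ d_β ∘ (φ × φ) ≤ A · d_{W_n}`, then either
`2^⌊√n⌋ ≤ (2C(A/B)+1)^d` or `A/B ≥ (1/2+ε)^{⌊√n⌋-n}`. -/
theorem statement14 {M : Type*} [MetricSpace M] [Fintype M] [Nontrivial M]
    (ε : ℝ) (hε0 : 0 < ε) (hε : ε < 1 / 2) (n d : ℕ) (C A B : ℝ)
    (hC : 1 ≤ C) (hA : 0 < A) (hB : 0 < B)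
    (hM : embedsM C (fun a b : M => dist a b)
      (fun a b : EuclideanSpace ℝ (Fin d) => ‖a - b‖))
    (β : ℝ) (hβ : 1 / 2 ≤ β)
    (N : M → Type*) [∀ x, MetricSpace (N x)] [∀ x, Fintype (N x)] [∀ x, Nonempty (N x)]
    (hN : ∀ x : M, ¬ embedsM (A / B) (dW ε n) (fun a b : N x => dist a b))
    (φ : Vert n → Σ x : M, N x)
    (hφ : ∀ u₁ u₂ : Vert n,
      B * dW ε n u₁ u₂ ≤
        comp β (fun a b : M => dist a b) (fun x (a b : N x) => dist a b) (φ u₁) (φ u₂) ∧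
      comp β (fun a b : M => dist a b) (fun x (a b : N x) => dist a b) (φ u₁) (φ u₂) ≤
        A * dW ε n u₁ u₂) :
    (2 : ℝ) ^ (Nat.sqrt n) ≤ (2 * C * (A / B) + 1) ^ d ∨
      (1 / 2 + ε) ^ ((Nat.sqrt n : ℤ) - (n : ℤ)) ≤ A / B :=
  statement14_general ε hε0 hε n d C A B hC hA hB hM β hβ N hN φ hφ

end Stmt
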